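/- arXiv:1509.01847 — 2 statements merged into one kernel-verified Lean document; each statement's English description precedes it below -/
import Mathlib

section
/- Let G = H∗_(K,φ) with K < H, and suppose there exist a, b ∈ H with a ∈ φ(γ_b(K)) such that K^a ⊊ K ⊊ φ(γ_b(K)). Then (after replacing φ by φγ_b, assume b = 1 and a ∈ φ(K)) the map ψ : h ↦ h for h ∈ H, t ↦ t²at⁻¹φ(a)⁻¹ is an automorphism of G with inverse h ↦ h, t ↦ tφ(a)ta⁻¹t⁻¹. -/
open HNNExtension

/-- The automorphism-induced HNN extension `H∗_(K,φ)`. -/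
abbrev AutHNN (H : Type*) [Group H] (K : Subgroup H) (φ : H ≃* H) :=
  HNNExtension H K (K.map (φ : H →* H)) (φ.subgroupMap K)

/-!
Let `ρ = t a t⁻¹ φ(a)⁻¹`, so that `ψ(t) = tρ` and the proposed inverse sends `t ↦ tρ⁻¹`.
Because `a⁻¹Ka ⊆ K`, conjugating an element of `φ(K)` successively by `φ(a)⁻¹`, `t⁻¹`, `a`, `t`
stays inside the domains of the HNN relations and returns it to itself: `ρ` centralizes `φ(K)`,
in particular `K ⊆ φ(K)` and `a ∈ φ(K)`. For any `c` centralizing `K`, fixing `H` and sending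
`t ↦ tc` respects the relation `t k t⁻¹ = φ(k)`; both twists, by `ρ` and by `ρ⁻¹`, fix `ρ` (as `ρ`
commutes with `a`), which is exactly what makes them mutually inverse.
-/

namespace HNNExtension

variable {G : Type*} [Group G] {A B : Subgroup G} {φ : A ≃* B}

def twist (c : HNNExtension G A B φ) (hc : ∀ a : A, Commute c (of (a : G))) :
    HNNExtension G A B φ →* HNNExtension G A B φ :=
  lift of (t * c) fun a => by rw [mul_assoc, (hc a).eq, ← mul_assoc, t_mul_of, mul_assoc]

variable {c : HNNExtension G A B φ} (hc : ∀ a : A, Commute c (of (a : G)))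

@[simp]
theorem twist_of (g : G) : twist c hc (of g) = of g := lift_of ..

@[simp]
theorem twist_t : twist c hc t = t * c := lift_t ..

def twistEquiv (hfix : twist c hc c = c)
    (hfix_inv : twist c⁻¹ (fun a => (hc a).inv_left) c = c) :
    HNNExtension G A B φ ≃* HNNExtension G A B φ :=
  MonoidHom.toMulEquiv (twist c hc) (twist c⁻¹ fun a => (hc a).inv_left)
    (hom_ext (by ext; simp) (by simp [hfix_inv]))
    (hom_ext (by ext; simp) (by simp [hfix]))

variable {hc} {hfix : twist c hc c = c} {hfix_inv : twist c⁻¹ (fun a => (hc a).inv_left) c = c}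

@[simp]
theorem twistEquiv_of (g : G) : twistEquiv hc hfix hfix_inv (of g) = of g := twist_of hc g

@[simp]
theorem twistEquiv_t : twistEquiv hc hfix hfix_inv t = t * c := twist_t hc

@[simp]
theorem twistEquiv_symm_of (g : G) : (twistEquiv hc hfix hfix_inv).symm (of g) = of g :=
  twist_of (fun a => (hc a).inv_left) g

@[simp]
theorem twistEquiv_symm_t : (twistEquiv hc hfix hfix_inv).symm t = t * c⁻¹ :=
  twist_t fun a => (hc a).inv_left

end HNNExtension

namespace AutHNN

variable {H : Type*} [Group H] {K : Subgroup H} {φ : H ≃* H}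

theorem t_mul_of_of_mem {k : H} (hk : k ∈ K) : (t : AutHNN H K φ) * of k = of (φ k) * t :=
  HNNExtension.t_mul_of (φ := φ.subgroupMap K) ⟨k, hk⟩

theorem inv_t_mul_of_apply_of_mem {k : H} (hk : k ∈ K) :
    (t : AutHNN H K φ)⁻¹ * of (φ k) = of k * t⁻¹ := by
  simpa [MulEquiv.subgroupMap_symm_apply] using
    HNNExtension.inv_t_mul_of (φ := φ.subgroupMap K) ⟨φ k, k, hk, rfl⟩

def conjDefect (a : H) : AutHNN H K φ := t * of a * t⁻¹ * (of (φ a))⁻¹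

theorem commute_conjDefect {a : H} (ha : K.map (MulAut.conj a⁻¹ : H →* H) ≤ K) {k : H}
    (hk : k ∈ K.map (φ : H →* H)) : Commute (conjDefect a : AutHNN H K φ) (of k) := by
  obtain ⟨k, hk, rfl⟩ := hk
  have hm : a⁻¹ * k * a ∈ K := ha ⟨k, hk, by simp⟩
  calc conjDefect a * of (φ k)
      = t * of a * (t⁻¹ * of (φ (a⁻¹ * k * a))) * (of (φ a))⁻¹ := by
        simp only [conjDefect, map_mul, map_inv]; group
    _ = t * of k * of a * t⁻¹ * (of (φ a))⁻¹ := by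
        rw [inv_t_mul_of_apply_of_mem hm]; simp only [map_mul, map_inv]; group
    _ = of (φ k) * conjDefect a := by
        rw [t_mul_of_of_mem hk]; simp only [conjDefect, mul_assoc]

theorem twist_conjDefect {c : AutHNN H K φ} (hc : ∀ k : K, Commute c (of (k : H))) {a : H}
    (hca : Commute c (of a)) : twist c hc (conjDefect a) = conjDefect a := by
  simp only [conjDefect, map_mul, map_inv, twist_of, twist_t, mul_inv_rev]
  rw [mul_assoc t c, hca.eq]
  group

end AutHNN

/-- If `a ∈ φ(K)` with `a⁻¹Ka ⊊ K ⊊ φ(K)`, then `h ↦ h`, `t ↦ t²at⁻¹φ(a)⁻¹`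
is an automorphism of `G` with inverse `h ↦ h`, `t ↦ tφ(a)ta⁻¹t⁻¹`. -/
theorem psi_is_automorphism {H : Type*} [Group H] (K : Subgroup H) (φ : H ≃* H)
    (a : H) (ha : a ∈ K.map (φ : H →* H))
    (h1 : K.map ((MulAut.conj a⁻¹ : MulAut H) : H →* H) < K)
    (h2 : K < K.map (φ : H →* H)) :
    ∃ ψ : AutHNN H K φ ≃* AutHNN H K φ,
      (∀ h : H, ψ (of h) = of h) ∧
      ψ t = t * t * of a * t⁻¹ * (of (φ a))⁻¹ ∧
      (∀ h : H, ψ.symm (of h) = of h) ∧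
      ψ.symm t = t * of (φ a) * t * (of a)⁻¹ * t⁻¹ := by
  have hcomm : ∀ {k}, k ∈ K.map (φ : H →* H) →
      Commute (AutHNN.conjDefect a : AutHNN H K φ) (of k) :=
    AutHNN.commute_conjDefect h1.le
  have hK : ∀ k : K, Commute (AutHNN.conjDefect a : AutHNN H K φ) (of (k : H)) :=
    fun k => hcomm (h2.le k.2)
  refine ⟨twistEquiv hK (AutHNN.twist_conjDefect hK (hcomm ha))
    (AutHNN.twist_conjDefect _ (hcomm ha).inv_left), twistEquiv_of, ?_, twistEquiv_symm_of, ?_⟩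
  · simp only [twistEquiv_t, AutHNN.conjDefect, mul_assoc]
  · simp only [twistEquiv_symm_t, AutHNN.conjDefect]
    group
end

section
/- Let G = H∗_(K,φ) where K is a normal subgroup of H. Suppose V is a subgroup with K ⊴ V ≤ N_H(K) = H and V ∩ Z(H) ∩ Fix(φ) = 1. Then the homomorphism χ̄₂ restricted to V induces an injective homomorphism V/K → Out_H^{(V)}(G). -/
/-!
If `χ̄₂(v)` is inner, say conjugation by `g`, then `w = v g` centralizes `H` in `G`.
Comparing reduced words of `h w` and `w h` shows that, unless `K = H`, such a `w` lies in
`H`; so `w = c` with `c ∈ Z(H)`, and the image of `t` becomes `t (v⁻¹c) = (φ(v)⁻¹c) t`.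
Britton's lemma then puts `v⁻¹c` in `K` with `φ(v⁻¹c) = φ(v)⁻¹c`, i.e. `φ c = c`.
Hence `c ∈ V ∩ Z(H) ∩ Fix(φ) = 1` and `v ∈ K`.
-/

open HNNExtension

/-- The inner automorphisms form a normal subgroup of `Aut(G)`. -/
instance innNormal (G : Type*) [Group G] :
    ((MulAut.conj : G →* MulAut G).range).Normal := by
  constructor
  rintro f ⟨g, rfl⟩ ψ
  refine ⟨ψ g, ?_⟩
  ext x
  simp [MulAut.conj, mul_assoc]

/-- The outer automorphism group `Out(G) = Aut(G)/Inn(G)`. -/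
abbrev OutGroup (G : Type*) [Group G] :=
  MulAut G ⧸ (MulAut.conj : G →* MulAut G).range

namespace HNNExtension

variable {G : Type*} [Group G] {A B : Subgroup G} {φ : A ≃* B}

open NormalWord

theorem mem_of_t_mul_of_mul_inv_t_mem_range {x : G}
    (h : t * of x * t⁻¹ ∈ (of.range : Subgroup (HNNExtension G A B φ))) : x ∈ A := by
  by_contra hx
  let w : ReducedWord G A B :=
    ⟨1, [(1, x), (-1, 1)], List.isChain_pair.2 fun hxA => absurd hxA hx⟩
  have hw : w.prod φ = t * of x * t⁻¹ := by simp [w, ReducedWord.prod, mul_assoc]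
  simpa [w] using ReducedWord.toList_eq_nil_of_mem_of_range φ w (hw ▸ h)

theorem exists_eq_of_t_mul_of_eq {x y : G} (h : (t : HNNExtension G A B φ) * of x = of y * t) :
    ∃ a : A, (a : G) = x ∧ (φ a : G) = y := by
  have hxA : x ∈ A := mem_of_t_mul_of_mul_inv_t_mem_range ⟨y, by rw [h, mul_inv_cancel_right]⟩
  refine ⟨⟨x, hxA⟩, rfl, of_injective φ (mul_right_cancel (b := t) ?_)⟩
  rw [← t_mul_of, h]

namespace NormalWord.ReducedWord

theorem exists_prod_eq (w : HNNExtension G A B φ) :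
    ∃ r : ReducedWord G A B, r.prod φ = w := by
  obtain ⟨d⟩ := TransversalPair.nonempty G A B
  exact ⟨(w • NormalWord.empty (d := d)).toReducedWord, by simp⟩

theorem exists_head_eq_prod_eq_mul_of (w : ReducedWord G A B) (hw : w.toList ≠ [])
    (g : G) : ∃ w' : ReducedWord G A B, w'.head = w.head ∧ w'.prod φ = w.prod φ * of g := by
  obtain ⟨head, l, chain⟩ := w
  obtain ⟨l, a, rfl⟩ := (List.eq_nil_or_concat l).resolve_left hw
  rw [List.concat_eq_append, List.isChain_append] at chain
  refine ⟨⟨head, l ++ [(a.1, a.2 * g)], List.isChain_append.2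
    ⟨chain.1, List.isChain_singleton _, fun x hx _ hy => ?_⟩⟩, rfl, ?_⟩
  · simp only [List.head?_cons, Option.mem_def, Option.some.injEq] at hy
    subst hy
    exact chain.2.2 x hx a rfl
  · simp [ReducedWord.prod, mul_assoc]

theorem toSubgroup_eq_top_of_forall_commute (w : ReducedWord G A B)
    (hw : w.toList ≠ []) (hc : ∀ g : G, Commute (w.prod φ) (of g)) :
    toSubgroup A B (-(w.toList.head hw).1) = ⊤ := by
  refine (Subgroup.eq_top_iff' _).2 fun x => ?_
  set g := w.head * x⁻¹ * w.head⁻¹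
  obtain ⟨w', hhead, hprod⟩ := w.exists_head_eq_prod_eq_mul_of (φ := φ) hw g
  let w₁ : ReducedWord G A B := ⟨g * w.head, w.toList, w.chain⟩
  have hw₁ : w₁.prod φ = w'.prod φ := by
    rw [hprod, (hc g).eq]
    simp [w₁, ReducedWord.prod, mul_assoc]
  have hmem := (HNNExtension.ReducedWord.map_fst_eq_and_of_prod_eq φ hw₁).2
    (w.toList.head hw).1 (by simp [w₁, List.head?_eq_some_head hw])
  simpa [w₁, g, hhead, mul_assoc] using hmem

end NormalWord.ReducedWord

theorem exists_eq_of_of_forall_commute (hA : A ≠ ⊤) (hB : B ≠ ⊤) {w : HNNExtension G A B φ}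
    (hc : ∀ g : G, Commute w (of g)) : ∃ c : G, w = of c := by
  obtain ⟨r, rfl⟩ := ReducedWord.exists_prod_eq w
  by_cases hr : r.toList = []
  · exact ⟨r.head, by simp [ReducedWord.prod, hr]⟩
  have htop := r.toSubgroup_eq_top_of_forall_commute hr hc
  rcases Int.units_eq_one_or (r.toList.head hr).1 with hu | hu <;> rw [hu] at htop
  · exact absurd htop hB
  · exact absurd htop hA

end HNNExtension

namespace AutHNN

variable {H : Type*} [Group H] {K : Subgroup H} {φ : H ≃* H}

theorem mem_and_apply_eq_of_t_mul_of_eq {x y : H} (h : (t : AutHNN H K φ) * of x = of y * t) :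
    x ∈ K ∧ φ x = y := by
  obtain ⟨⟨a, ha⟩, rfl, rfl⟩ := exists_eq_of_t_mul_of_eq h
  exact ⟨ha, rfl⟩

theorem exists_mem_center_fixed_of_conj (hK : K ≠ ⊤) {b : H} {g : AutHNN H K φ}
    (hof : ∀ h : H, g * of h * g⁻¹ = of (b⁻¹ * h * b))
    (ht : g * t * g⁻¹ = of (b⁻¹ * φ b) * t) :
    ∃ c ∈ Subgroup.center H, φ c = c ∧ b⁻¹ * c ∈ K := by
  have hB : K.map (φ : H →* H) ≠ ⊤ := by
    rw [← Subgroup.map_top_of_surjective (φ : H →* H) φ.surjective]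
    exact (Subgroup.map_injective φ.injective).ne hK
  have hcomm : ∀ h : H, Commute (of b * g) (of h) := fun h => by
    have hgh : g * of h = of (b⁻¹ * h * b) * g := mul_inv_eq_iff_eq_mul.1 (hof h)
    simp only [Commute, SemiconjBy, mul_assoc, hgh, map_mul, map_inv, mul_inv_cancel_left]
  obtain ⟨c, hc⟩ := exists_eq_of_of_forall_commute hK hB hcomm
  have hcZ : c ∈ Subgroup.center H := Subgroup.mem_center_iff.2 fun h =>
    of_injective _ (by simpa only [map_mul, hc] using ((hcomm h).eq).symm)
  have htc : (t : AutHNN H K φ) * of (b⁻¹ * c) = of ((φ b)⁻¹ * c) * t := by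
    have hg : g = of b⁻¹ * of c := by rw [← hc, map_inv, inv_mul_cancel_left]
    subst hg
    have hgt := mul_inv_eq_iff_eq_mul.1 ht
    calc (t : AutHNN H K φ) * of (b⁻¹ * c)
        = of (φ b)⁻¹ * of b * (of (b⁻¹ * φ b) * t * (of b⁻¹ * of c)) := by
          simp [mul_assoc]
      _ = of (φ b)⁻¹ * of b * (of b⁻¹ * of c * t) := by rw [hgt]
      _ = of ((φ b)⁻¹ * c) * t := by simp [mul_assoc]
  obtain ⟨hmem, hφ⟩ := mem_and_apply_eq_of_t_mul_of_eq htc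
  refine ⟨c, hcZ, ?_, hmem⟩
  simpa using hφ

end AutHNN

/-- If `K ⊴ V ≤ N_H(K)` with `V ∩ Z(H) ∩ Fix(φ) = 1`, then the map
`χ̄₂ : N_H(K) → Out_H^(V)(G)`, `b ↦ [α_(γ_b, b⁻¹φ(b))]`, restricted to `V`,
induces an injective homomorphism `V/K → Out_H^(V)(G)`. -/
theorem induced_map_injective {H : Type*} [Group H] (K : Subgroup H) (φ : H ≃* H)
    (V : Subgroup H) (hKV : K ≤ V) (hVN : V ≤ Subgroup.normalizer (K : Set H))
    (hVJ : ∀ v ∈ V, v ∈ Subgroup.center H → φ v = v → v = 1)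
    (τ : Subgroup.normalizer (K : Set H) →* OutGroup (AutHNN H K φ))
    (hτ : ∀ b : Subgroup.normalizer (K : Set H), ∃ ψ : MulAut (AutHNN H K φ),
      (∀ h : H, ψ (of h) = of ((b : H)⁻¹ * h * b)) ∧
      ψ t = of ((b : H)⁻¹ * φ (b : H)) * t ∧
      τ b = QuotientGroup.mk ψ) :
    ∀ v (hv : v ∈ V), τ ⟨v, hVN hv⟩ = 1 → v ∈ K := by
  intro v hv hτv
  by_cases hK : K = ⊤
  · exact hK ▸ Subgroup.mem_top v
  obtain ⟨ψ, hψof, hψt, hψ⟩ := hτ ⟨v, hVN hv⟩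
  obtain ⟨g, rfl⟩ := (QuotientGroup.eq_one_iff ψ).1 (hψ ▸ hτv)
  obtain ⟨c, hcZ, hφc, hvc⟩ := AutHNN.exists_mem_center_fixed_of_conj hK hψof hψt
  have hc : c = 1 := hVJ c (by simpa using mul_mem hv (hKV hvc)) hcZ hφc
  simpa [hc] using hvc
end
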